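/- Let W : ℝ × ℝ → ℝ be twice continuously differentiable with bounded second partial derivatives (in particular |∂²W/∂s∂κ| ≤ M and |∂²W/∂κ²| ≤ M for some M), and let α > 0, h > 0. For β > 0 define v_β(s, t) = W(s, ((t − s)/α − 1)/h) + (β/(2h²))·((t − s)/α − 1)². Then there exists β₀ > 0 such that for every β > β₀ there exists a constant C > 0 with −∂²v_β/∂s∂t(s, t) > C for all s, t ∈ ℝ; i.e., the site energy of the double chain model satisfies the twist condition for β large enough. -/

import Mathlib

/-!
Writing `c = 1/(αh)` and `κ = c (t - s) - 1/h`, the bending term is `(β/2) κ²`, so the site energy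
is `W(s, κ) + (β/2) κ²` along an affine disregistry. By the chain rule its mixed derivative is
`c ∂²W/∂s∂κ - c² (∂²W/∂κ² + β)`, and bounding both second partials by `M` gives
`-∂²v_β/∂s∂t ≥ c² (β - M) - c M`, which is positive once `β > M (1 + αh)`.
-/

open Function

section Partials

variable {G : Type*} [NormedAddCommGroup G] [NormedSpace ℝ G] {F : ℝ × ℝ → G}

theorem hasDerivAt_comp_prodMk {a b : ℝ → ℝ} {a' b' x : ℝ}
    (hF : DifferentiableAt ℝ F (a x, b x)) (ha : HasDerivAt a a' x) (hb : HasDerivAt b b' x) :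
    HasDerivAt (fun y => F (a y, b y)) (fderiv ℝ F (a x, b x) (a', b')) x :=
  hF.hasFDerivAt.comp_hasDerivAt x (ha.prodMk hb)

theorem hasDerivAt_fderiv_apply_comp_prodMk_snd {b : ℝ → ℝ} {b' x : ℝ} (s : ℝ) (v : ℝ × ℝ)
    (hF : DifferentiableAt ℝ (fderiv ℝ F) (s, b x)) (hb : HasDerivAt b b' x) :
    HasDerivAt (fun y => fderiv ℝ F (s, b y) v) (fderiv ℝ (fderiv ℝ F) (s, b x) (0, b') v) x := by
  have h := (hasDerivAt_comp_prodMk (F := fderiv ℝ F) hF (hasDerivAt_const x s) hb).clm_apply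
    (hasDerivAt_const x v)
  simpa using h

variable {W : ℝ → ℝ → G}

theorem deriv_fst_eq_fderiv_uncurry {s κ : ℝ} (hW : DifferentiableAt ℝ (uncurry W) (s, κ)) :
    deriv (fun s' => W s' κ) s = fderiv ℝ (uncurry W) (s, κ) (1, 0) :=
  (hasDerivAt_comp_prodMk hW (hasDerivAt_id s) (hasDerivAt_const s κ)).deriv

theorem deriv_snd_eq_fderiv_uncurry {s κ : ℝ} (hW : DifferentiableAt ℝ (uncurry W) (s, κ)) :
    deriv (fun κ' => W s κ') κ = fderiv ℝ (uncurry W) (s, κ) (0, 1) :=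
  (hasDerivAt_comp_prodMk hW (hasDerivAt_const κ s) (hasDerivAt_id κ)).deriv

theorem deriv_deriv_fst_snd_eq_fderiv_fderiv_uncurry {s κ : ℝ} (hW : Differentiable ℝ (uncurry W))
    (hW' : DifferentiableAt ℝ (fderiv ℝ (uncurry W)) (s, κ)) :
    deriv (fun κ' => deriv (fun s' => W s' κ') s) κ
      = fderiv ℝ (fderiv ℝ (uncurry W)) (s, κ) (0, 1) (1, 0) := by
  simp_rw [deriv_fst_eq_fderiv_uncurry (hW _)]
  exact (hasDerivAt_fderiv_apply_comp_prodMk_snd s (1, 0) hW' (hasDerivAt_id κ)).deriv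

theorem deriv_deriv_snd_eq_fderiv_fderiv_uncurry {s κ : ℝ} (hW : Differentiable ℝ (uncurry W))
    (hW' : DifferentiableAt ℝ (fderiv ℝ (uncurry W)) (s, κ)) :
    deriv (deriv fun κ' => W s κ') κ = fderiv ℝ (fderiv ℝ (uncurry W)) (s, κ) (0, 1) (0, 1) := by
  have hd : deriv (fun κ' => W s κ') = fun κ' => fderiv ℝ (uncurry W) (s, κ') (0, 1) :=
    funext fun _ => deriv_snd_eq_fderiv_uncurry (hW _)
  rw [hd]
  exact (hasDerivAt_fderiv_apply_comp_prodMk_snd s (0, 1) hW' (hasDerivAt_id κ)).deriv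

end Partials

theorem deriv_deriv_comp_affine_disregistry {W : ℝ → ℝ → ℝ} (hW : ContDiff ℝ 2 (uncurry W))
    (c d β s t : ℝ) :
    deriv (fun t' => deriv
        (fun s' => W s' (c * (t' - s') + d) + β / 2 * (c * (t' - s') + d) ^ 2) s) t
      = c * deriv (fun κ' => deriv (fun s' => W s' κ') s) (c * (t - s) + d)
        - c ^ 2 * (deriv (deriv fun κ' => W s κ') (c * (t - s) + d) + β) := by
  have hWd : Differentiable ℝ (uncurry W) := hW.differentiable two_ne_zero
  have hWd' : Differentiable ℝ (fderiv ℝ (uncurry W)) :=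
    (hW.fderiv_right (m := 1) (by norm_num)).differentiable one_ne_zero
  have hκs : ∀ t', HasDerivAt (fun s' => c * (t' - s') + d) (-c) s := fun t' => by
    simpa using (((hasDerivAt_id s).const_sub t').const_mul c).add_const d
  have hκt : HasDerivAt (fun t' => c * (t' - s) + d) c t := by
    simpa using (((hasDerivAt_id t).sub_const s).const_mul c).add_const d
  have inner : ∀ t', deriv
      (fun s' => W s' (c * (t' - s') + d) + β / 2 * (c * (t' - s') + d) ^ 2) s
      = fderiv ℝ (uncurry W) (s, c * (t' - s) + d) (1, -c) - β * c * (c * (t' - s) + d) := by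
    intro t'
    have hWκ : HasDerivAt (fun s' => W s' (c * (t' - s') + d))
        (fderiv ℝ (uncurry W) (s, c * (t' - s) + d) (1, -c)) s :=
      hasDerivAt_comp_prodMk (hWd _) (hasDerivAt_id s) (hκs t')
    have hq := ((hκs t').pow 2).const_mul (β / 2)
    refine (hWκ.add hq).deriv.trans ?_
    push_cast
    ring
  have outer := (hasDerivAt_fderiv_apply_comp_prodMk_snd s (1, -c) (hWd' _) hκt).fun_sub
    (hκt.const_mul (β * c))
  rw [funext inner, outer.deriv, deriv_deriv_fst_snd_eq_fderiv_fderiv_uncurry hWd (hWd' _),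
    deriv_deriv_snd_eq_fderiv_fderiv_uncurry hWd (hWd' _)]
  have hdir_t : ((0 : ℝ), c) = c • ((0 : ℝ), (1 : ℝ)) := by simp
  have hdir_s : ((1 : ℝ), -c) = ((1 : ℝ), (0 : ℝ)) + (-c) • ((0 : ℝ), (1 : ℝ)) := by simp
  rw [hdir_t, hdir_s]
  simp only [map_smul, map_add, smul_apply, smul_eq_mul]
  ring

theorem le_neg_mixed_deriv_of_abs_le {A B M c β : ℝ} (hc : 0 < c) (hA : |A| ≤ M)
    (hB : |B| ≤ M) : c ^ 2 * (β - M) - c * M ≤ -(c * A - c ^ 2 * (B + β)) := by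
  nlinarith [abs_le.mp hA, abs_le.mp hB, sq_nonneg c]

/-- The site energy of the double chain model,
`v_β(s,t) = W(s, ((t−s)/α − 1)/h) + (β/(2h²))·((t−s)/α − 1)²`,
satisfies the twist condition `−∂²v_β/∂s∂t > C > 0` for every bending modulus `β` large
enough, provided the inter-chain potential `W` has bounded second partial derivatives. -/
theorem double_chain_twist_condition
    (W : ℝ → ℝ → ℝ)
    (hW : ContDiff ℝ 2 (Function.uncurry W))
    (M : ℝ)
    (hM : ∀ s κ : ℝ,
      |deriv (fun κ' => deriv (fun s' => W s' κ') s) κ| ≤ M ∧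
      |deriv (deriv (fun κ' => W s κ')) κ| ≤ M)
    (α h : ℝ) (hα : 0 < α) (hh : 0 < h) :
    ∃ β₀ : ℝ, 0 < β₀ ∧ ∀ β : ℝ, β₀ < β → ∃ C : ℝ, 0 < C ∧ ∀ s t : ℝ,
      C < -(deriv (fun t' => deriv
          (fun s' => W s' (((t' - s') / α - 1) / h)
            + β / (2 * h ^ 2) * ((t' - s') / α - 1) ^ 2) s) t) := by
  have hM₀ : 0 ≤ M := (abs_nonneg _).trans (hM 0 0).1
  set c := (α * h)⁻¹ with hc_def
  have hc : 0 < c := by positivity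
  have hcM : c * M = c ^ 2 * (M * (α * h)) := by
    rw [hc_def]
    field_simp
  refine ⟨M * (1 + α * h) + 1, by positivity, fun β hβ => ?_⟩
  have hgap : 0 < c ^ 2 * (β - M) - c * M := by
    have hβM : 0 < β - M * (1 + α * h) := by linarith
    nlinarith [mul_pos (pow_pos hc 2) hβM]
  refine ⟨(c ^ 2 * (β - M) - c * M) / 2, half_pos hgap, fun s t => ?_⟩
  have hv : ∀ s' t' : ℝ,
      W s' (((t' - s') / α - 1) / h) + β / (2 * h ^ 2) * ((t' - s') / α - 1) ^ 2
        = W s' (c * (t' - s') + -h⁻¹) + β / 2 * (c * (t' - s') + -h⁻¹) ^ 2 := by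
    intro s' t'
    rw [show ((t' - s') / α - 1) / h = c * (t' - s') + -h⁻¹ by ring]
    ring
  simp_rw [hv, deriv_deriv_comp_affine_disregistry hW]
  exact (half_lt_self hgap).trans_le
    (le_neg_mixed_deriv_of_abs_le hc (hM s _).1 (hM s _).2)
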